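/- arXiv:1209.4691 — 3 statements merged into one kernel-verified Lean document; each statement's English description precedes it below -/
import Mathlib

section
/- Let ω be an infinite word over a finite set S of integers. The following are equivalent: (i) ω has bounded abelian complexity; (ii) for every non-erasing morphism φ assigning to each s ∈ S a nonempty finite integer word (over some finite integer alphabet), the infinite word φ(ω) = φ(ω(0))φ(ω(1))φ(ω(2))⋯ has bounded additive complexity. -/
/-!
Bounded abelian complexity of a word over a finite alphabet bounds, for every weight `g`, the
number of values taken by the increments of `h m = ∑ i < m, g (ω i)` over windows of each fixed
length. As these increments change by bounded steps when the window slides, a discrete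
intermediate value argument confines them to an interval of bounded width, uniformly in the
length. For the weights `s ↦ |φ s|` and `s ↦ ∑ φ s` this controls the positions and the sums
of the blocks `φ (ω m)` in `φ(ω)`. A factor of `φ(ω)` of length `n` agrees, up to bounded
boundary errors, with a run of consecutive blocks of total length about `n`, and two such runs
have sums within a bounded distance; so factor sums of each length take boundedly many values.

Conversely, the morphisms `s ↦ [if s = t then 1 else 0]` turn additive complexity into counts
of the letter `t`, and over a finite alphabet the abelian class of a factor is determined by
these counts.
-/

/-- `B` is a factor of the infinite word `ω`. -/
def Factor (ω : ℕ → ℤ) (B : List ℤ) : Prop :=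
  ∃ m : ℕ, B = (List.range B.length).map (fun i => ω (m + i))

/-- `ω` has bounded additive complexity: there is `M` such that for every `n ≥ 1`
the set of sums of factors of length `n` has at most `M` elements. -/
def BoundedAddComplexity (ω : ℕ → ℤ) : Prop :=
  ∃ M : ℕ, ∀ n : ℕ, 1 ≤ n →
    ∃ T : Finset ℤ, T.card ≤ M ∧
      ∀ B : List ℤ, Factor ω B → B.length = n → B.sum ∈ T

/-- The slope of a finite word. -/
def wordSlope (B : List ℤ) : ℚ := (B.sum : ℚ) / (B.length : ℚ)

/-- `ω` has slope `L`. -/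
def HasSlope (ω : ℕ → ℤ) (L : ℝ) : Prop :=
  Filter.Tendsto (fun n : ℕ => (∑ i ∈ Finset.range n, (ω i : ℝ)) / n)
    Filter.atTop (nhds L)

/-- ω has bounded abelian complexity: for every n ≥ 1 the factors of length n fall
into at most M abelian equivalence classes (classes = multisets of letters). -/
def BoundedAbelianComplexity (ω : ℕ → ℤ) : Prop :=
  ∃ M : ℕ, ∀ n : ℕ, 1 ≤ n →
    ∃ T : Finset (Multiset ℤ), T.card ≤ M ∧
      ∀ B : List ℤ, Factor ω B → B.length = n → (↑B : Multiset ℤ) ∈ T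

/-- The image of the length-`n` prefix of ω under the morphism φ. -/
def phiPrefix (φ : ℤ → List ℤ) (ω : ℕ → ℤ) (n : ℕ) : List ℤ :=
  ((List.range n).map (fun i => φ (ω i))).flatten

/-- ω' is the image of the infinite word ω under the morphism φ. -/
def IsImage (φ : ℤ → List ℤ) (ω ω' : ℕ → ℤ) : Prop :=
  ∀ n : ℕ, phiPrefix φ ω n = (List.range (phiPrefix φ ω n).length).map ω'

def prefixSum (v : ℕ → ℤ) (m : ℕ) : ℤ := ∑ i ∈ Finset.range m, v i

@[simp] lemma prefixSum_zero (v : ℕ → ℤ) : prefixSum v 0 = 0 := Finset.sum_range_zero _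

lemma prefixSum_succ (v : ℕ → ℤ) (m : ℕ) : prefixSum v (m + 1) = prefixSum v m + v m :=
  Finset.sum_range_succ _ _

def factorAt (ω : ℕ → ℤ) (m n : ℕ) : List ℤ := (List.range n).map fun i => ω (m + i)

def BalancedSeq (h : ℕ → ℤ) : Prop :=
  ∃ C : ℤ, ∀ m m' r : ℕ, |(h (m + r) - h m) - (h (m' + r) - h m')| ≤ C

section IntegerSequences

variable {f : ℕ → ℤ} {K : ℤ}

lemma exists_abs_sub_le_of_mem_uIcc (hf : ∀ m, |f (m + 1) - f m| ≤ K) {a : ℕ} :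
    ∀ b, a ≤ b → ∀ y ∈ Set.uIcc (f a) (f b), ∃ i, |f i - y| ≤ K := by
  refine Nat.le_induction ?_ fun b _ ih y hy => ?_
  · intro y hy
    refine ⟨a, ?_⟩
    rw [Set.uIcc_self, Set.mem_singleton_iff] at hy
    simpa [hy] using (abs_nonneg _).trans (hf 0)
  · rcases Set.uIcc_subset_uIcc_union_uIcc (b := f b) hy with hy | hy
    · exact ih y hy
    · refine ⟨b, ?_⟩
      have := hf b
      rw [Set.mem_uIcc] at hy
      rw [abs_le] at this ⊢
      omega

lemma sub_lt_mul_of_abs_step_le_of_card_le (hf : ∀ m, |f (m + 1) - f m| ≤ K)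
    {T : Finset ℤ} {M : ℕ} (hT : T.card ≤ M) (hfT : ∀ m, f m ∈ T) (a b : ℕ) :
    f b - f a < M * (2 * K + 1) := by
  have hK : 0 ≤ K := (abs_nonneg _).trans (hf 0)
  by_contra! hab
  -- for each `t ≤ M` some value of `f` lies within `K` of `f a + t * (2K + 1)`, i.e. in bucket `t`:
  -- `M + 1` buckets hit by at most `M` values
  let bucket : ℤ → ℤ := fun z => (z - f a + K) / (2 * K + 1)
  have hIcc : Finset.Icc 0 (M : ℤ) ⊆ T.image bucket := by
    intro t ht
    rw [Finset.mem_Icc] at ht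
    have hy : f a + t * (2 * K + 1) ∈ Set.uIcc (f a) (f b) := by
      rw [Set.mem_uIcc]
      left
      constructor <;> nlinarith
    obtain ⟨i, hi⟩ : ∃ i, |f i - (f a + t * (2 * K + 1))| ≤ K := by
      rcases le_total a b with h | h
      · exact exists_abs_sub_le_of_mem_uIcc hf b h _ hy
      · exact exists_abs_sub_le_of_mem_uIcc hf a h _ (Set.uIcc_comm (f a) (f b) ▸ hy)
    refine Finset.mem_image.mpr ⟨f i, hfT i, ?_⟩
    rw [abs_le] at hi
    exact (Int.ediv_eq_iff_of_pos (by omega)).mpr ⟨by linarith, by linarith⟩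
  have := (Finset.card_le_card hIcc).trans Finset.card_image_le
  simp only [Int.card_Icc, sub_zero, Int.toNat_natCast_add_one] at this
  omega

lemma abs_sub_le_mul_of_abs_step_le (hf : ∀ m, |f (m + 1) - f m| ≤ K) (a b : ℕ) :
    |f b - f a| ≤ K * |(b : ℤ) - a| := by
  wlog hab : a ≤ b generalizing a b
  · rw [abs_sub_comm, abs_sub_comm (b : ℤ)]
    exact this b a (by omega)
  induction b, hab using Nat.le_induction with
  | base => simp
  | succ b hab ih =>
    rw [abs_of_nonneg (by omega : (0 : ℤ) ≤ (b + 1 : ℕ) - a)] at *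
    rw [abs_of_nonneg (by omega : (0 : ℤ) ≤ b - a)] at ih
    calc |f (b + 1) - f a| ≤ |f (b + 1) - f b| + |f b - f a| := abs_sub_le _ _ _
      _ ≤ K + K * (b - a) := add_le_add (hf b) ih
      _ = K * ((b + 1 : ℕ) - a) := by push_cast; ring

lemma balancedSeq_of_card_increments_le (hf : ∀ m, |f (m + 1) - f m| ≤ K) {M : ℕ}
    (hcard : ∀ r, 1 ≤ r → ∃ T : Finset ℤ, T.card ≤ M ∧ ∀ m, f (m + r) - f m ∈ T) :
    BalancedSeq f := by
  refine ⟨M * (4 * K + 1), fun m m' r => ?_⟩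
  have hK : 0 ≤ K := (abs_nonneg _).trans (hf 0)
  rcases Nat.eq_zero_or_pos r with rfl | hr
  · simp only [add_zero, sub_self, abs_zero]
    positivity
  obtain ⟨T, hT, hfT⟩ := hcard r hr
  have hstep : ∀ j, |(f (j + 1 + r) - f (j + 1)) - (f (j + r) - f j)| ≤ 2 * K := by
    intro j
    have h1 := hf (j + r)
    have h2 := hf j
    rw [show j + 1 + r = j + r + 1 by omega]
    rw [abs_le] at *
    omega
  have h1 := sub_lt_mul_of_abs_step_le_of_card_le hstep hT hfT m m'
  have h2 := sub_lt_mul_of_abs_step_le_of_card_le hstep hT hfT m' m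
  rw [abs_le]
  constructor <;> linarith

end IntegerSequences

lemma Factor.eq_factorAt {ω : ℕ → ℤ} {B : List ℤ} {n : ℕ} (hB : Factor ω B)
    (hn : B.length = n) : ∃ m, B = factorAt ω m n := by
  subst hn
  exact hB

lemma factor_factorAt (ω : ℕ → ℤ) (m n : ℕ) : Factor ω (factorAt ω m n) :=
  ⟨m, by simp [factorAt]⟩

lemma length_factorAt (ω : ℕ → ℤ) (m n : ℕ) : (factorAt ω m n).length = n := by
  simp [factorAt]

lemma sum_factorAt (v : ℕ → ℤ) (m n : ℕ) :
    (factorAt v m n).sum = prefixSum v (m + n) - prefixSum v m := by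
  rw [prefixSum, prefixSum, Finset.sum_range_add, add_sub_cancel_left]
  rfl

lemma boundedAddComplexity_of_balancedSeq {v : ℕ → ℤ} (hv : BalancedSeq (prefixSum v)) :
    BoundedAddComplexity v := by
  obtain ⟨C, hC⟩ := hv
  refine ⟨2 * C.toNat + 1, fun n _ =>
    ⟨Finset.Icc (prefixSum v n - C) (prefixSum v n + C), ?_, ?_⟩⟩
  · rw [Int.card_Icc]
    omega
  · intro B hB hn
    obtain ⟨m, rfl⟩ := hB.eq_factorAt hn
    have h := abs_le.mp (hC m 0 n)
    rw [zero_add, prefixSum_zero, sub_zero] at h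
    rw [sum_factorAt, Finset.mem_Icc]
    constructor <;> linarith

lemma map_factorAt (g : ℤ → ℤ) (ω : ℕ → ℤ) (m n : ℕ) :
    (factorAt ω m n).map g = factorAt (g ∘ ω) m n := by
  simp [factorAt]

lemma BoundedAbelianComplexity.balancedSeq_prefixSum {S : Finset ℤ} {ω : ℕ → ℤ}
    (hω : ∀ i, ω i ∈ S) (h : BoundedAbelianComplexity ω) (g : ℤ → ℤ) :
    BalancedSeq (prefixSum (g ∘ ω)) := by
  obtain ⟨M, hM⟩ := h
  refine balancedSeq_of_card_increments_le (K := ((S.sup fun s => (g s).natAbs : ℕ) : ℤ))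
    (M := M) (fun m => ?_) fun r hr => ?_
  · rw [prefixSum_succ, add_sub_cancel_left, Function.comp_apply, Int.abs_eq_natAbs]
    exact_mod_cast Finset.le_sup (f := fun s => (g s).natAbs) (hω m)
  · obtain ⟨T, hT, hωT⟩ := hM r hr
    refine ⟨T.image fun μ => (μ.map g).sum, Finset.card_image_le.trans hT, fun m => ?_⟩
    refine Finset.mem_image.mpr ⟨_, hωT _ (factor_factorAt ω m r) (length_factorAt ω m r), ?_⟩
    rw [Multiset.map_coe, Multiset.sum_coe, map_factorAt, sum_factorAt]

section Blocks

variable {Λ : ℕ → ℕ}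

lemma exists_le_lt_succ (h0 : Λ 0 = 0) (hΛ : StrictMono Λ) (p : ℕ) :
    ∃ m, Λ m ≤ p ∧ p < Λ (m + 1) := by
  induction p with
  | zero => exact ⟨0, h0.le, (Nat.zero_le _).trans_lt (hΛ (Nat.lt_add_one 0))⟩
  | succ p ih =>
    obtain ⟨m, hm, hpm⟩ := ih
    rcases (Nat.succ_le_of_lt hpm).lt_or_eq with h | h
    · exact ⟨m, by omega, h⟩
    · exact ⟨m + 1, h.ge, h.trans_lt (hΛ (Nat.lt_add_one _))⟩

variable {K : ℤ}

lemma exists_block_window (h0 : Λ 0 = 0) (hΛ : StrictMono Λ)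
    (hgap : ∀ m, (Λ (m + 1) : ℤ) ≤ Λ m + K) (p n : ℕ) :
    ∃ m r, |(p : ℤ) - Λ m| ≤ K ∧ |((p + n : ℕ) : ℤ) - Λ (m + r)| ≤ K := by
  obtain ⟨m, hm, hpm⟩ := exists_le_lt_succ h0 hΛ p
  obtain ⟨m', hm', hpm'⟩ := exists_le_lt_succ h0 hΛ (p + n)
  have hmm' : m ≤ m' := by
    by_contra! h
    have := hΛ.monotone (show m' + 1 ≤ m by omega)
    omega
  refine ⟨m, m' - m, ?_, ?_⟩
  · have := hgap m
    rw [abs_le]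
    omega
  · have := hgap m'
    rw [Nat.add_sub_cancel' hmm', abs_le]
    omega

lemma BalancedSeq.of_comp {f : ℕ → ℤ} {A : ℤ} (hf : ∀ i, |f (i + 1) - f i| ≤ A)
    (h0 : Λ 0 = 0) (hΛ : StrictMono Λ) (hgap : ∀ m, (Λ (m + 1) : ℤ) ≤ Λ m + K)
    (hΛbal : BalancedSeq fun m => (Λ m : ℤ)) (hfΛ : BalancedSeq (f ∘ Λ)) : BalancedSeq f := by
  obtain ⟨CΛ, hCΛ⟩ := hΛbal
  obtain ⟨CF, hCF⟩ := hfΛ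
  have hA : 0 ≤ A := (abs_nonneg _).trans (hf 0)
  have hlip : ∀ (a b : ℕ) (D : ℤ), |(b : ℤ) - a| ≤ D → |f b - f a| ≤ A * D :=
    fun a b D hab =>
      (abs_sub_le_mul_of_abs_step_le hf a b).trans (mul_le_mul_of_nonneg_left hab hA)
  refine ⟨4 * (A * K) + CF + A * (CΛ + 4 * K), fun p q n => ?_⟩
  obtain ⟨m, r, hp, hpn⟩ := exists_block_window h0 hΛ hgap p n
  obtain ⟨m', r', hq, hqn⟩ := exists_block_window h0 hΛ hgap q n
  -- both windows cover about `n` letters, so `Λ (m' + r)` is close to `Λ (m' + r')`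
  have hclose : |(Λ (m' + r) : ℤ) - Λ (m' + r')| ≤ CΛ + 4 * K := by
    have := hCΛ m' m r
    push_cast at hpn hqn
    rw [abs_le] at *
    constructor <;> linarith
  have e1 := hlip _ _ _ ((abs_sub_comm _ _).le.trans hp)
  have e2 := hlip _ _ _ ((abs_sub_comm _ _).le.trans hq)
  have e3 := hlip _ _ _ hpn
  have e4 := hlip _ _ _ hqn
  have e5 := hlip _ _ _ hclose
  have e6 := hCF m m' r
  simp only [Function.comp_apply] at e6
  rw [abs_le] at *
  constructor <;> linarith

end Blocks

section Images

variable {φ : ℤ → List ℤ} {ω ω' : ℕ → ℤ}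

lemma phiPrefix_succ (m : ℕ) : phiPrefix φ ω (m + 1) = phiPrefix φ ω m ++ φ (ω m) := by
  simp [phiPrefix, List.range_succ]

lemma length_phiPrefix (m : ℕ) :
    ((phiPrefix φ ω m).length : ℤ) = prefixSum ((fun s => ((φ s).length : ℤ)) ∘ ω) m := by
  induction m with
  | zero => simp [phiPrefix]
  | succ m ih => simp [phiPrefix_succ, prefixSum_succ, ih]

lemma sum_phiPrefix (m : ℕ) :
    (phiPrefix φ ω m).sum = prefixSum ((fun s => (φ s).sum) ∘ ω) m := by
  induction m with
  | zero => simp [phiPrefix]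
  | succ m ih => simp [phiPrefix_succ, prefixSum_succ, ih]

lemma strictMono_length_phiPrefix (hφ : ∀ i, φ (ω i) ≠ []) :
    StrictMono fun m => (phiPrefix φ ω m).length :=
  strictMono_nat_of_lt_succ fun m => by
    simpa [phiPrefix_succ, List.length_pos_iff] using hφ m

lemma IsImage.prefixSum_length_phiPrefix (him : IsImage φ ω ω') (m : ℕ) :
    prefixSum ω' (phiPrefix φ ω m).length = (phiPrefix φ ω m).sum := by
  conv_rhs => rw [him m]
  rfl

lemma IsImage.exists_mem (him : IsImage φ ω ω') (hφ : ∀ i, φ (ω i) ≠ []) (i : ℕ) :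
    ∃ m, ω' i ∈ φ (ω m) := by
  have hi : i < (phiPrefix φ ω (i + 1)).length :=
    (strictMono_length_phiPrefix hφ).id_le (i + 1)
  have : ω' i ∈ phiPrefix φ ω (i + 1) := by
    rw [him]
    exact List.mem_map.mpr ⟨i, List.mem_range.mpr hi, rfl⟩
  simp only [phiPrefix, List.mem_flatten, List.mem_map] at this
  obtain ⟨_, ⟨m, _, rfl⟩, hm⟩ := this
  exact ⟨m, hm⟩

lemma isImage_singleton (g : ℤ → ℤ) (ω : ℕ → ℤ) : IsImage (fun s => [g s]) ω (g ∘ ω) := by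
  intro n
  have : phiPrefix (fun s => [g s]) ω n = (List.range n).map (g ∘ ω) := by
    induction n with
    | zero => rfl
    | succ n ih => simp [phiPrefix_succ, ih, List.range_succ]
  simp [this]

end Images

lemma BoundedAbelianComplexity.boundedAddComplexity_of_isImage {S : Finset ℤ} {ω : ℕ → ℤ}
    (hω : ∀ i, ω i ∈ S) (h : BoundedAbelianComplexity ω) {φ : ℤ → List ℤ}
    (hφ : ∀ s ∈ S, φ s ≠ []) {ω' : ℕ → ℤ} (him : IsImage φ ω ω') : BoundedAddComplexity ω' := by
  have hφω : ∀ i, φ (ω i) ≠ [] := fun i => hφ _ (hω i)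
  refine boundedAddComplexity_of_balancedSeq <| BalancedSeq.of_comp
    (Λ := fun m => (phiPrefix φ ω m).length)
    (A := ((S.biUnion fun s => (φ s).toFinset).sup Int.natAbs : ℕ))
    (K := ((S.sup fun s => (φ s).length : ℕ) : ℤ))
    (fun i => ?_) rfl (strictMono_length_phiPrefix hφω) (fun m => ?_) ?_ ?_
  · obtain ⟨m, hm⟩ := him.exists_mem hφω i
    rw [prefixSum_succ, add_sub_cancel_left, Int.abs_eq_natAbs, Nat.cast_le]
    exact Finset.le_sup (f := Int.natAbs)
      (Finset.mem_biUnion.mpr ⟨_, hω m, List.mem_toFinset.mpr hm⟩)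
  · have := Finset.le_sup (f := fun s => (φ s).length) (hω m)
    simp only [phiPrefix_succ, List.length_append, Nat.cast_add]
    exact_mod_cast Nat.add_le_add_left this _
  · convert h.balancedSeq_prefixSum hω (fun s => ((φ s).length : ℤ)) using 1
    exact funext length_phiPrefix
  · convert h.balancedSeq_prefixSum hω (fun s => (φ s).sum) using 1
    exact funext fun m => (him.prefixSum_length_phiPrefix m).trans (sum_phiPrefix m)

lemma sum_map_indicator_eq_count {α : Type*} [DecidableEq α] (l : List α) (t : α) :
    (l.map fun x => if x = t then (1 : ℤ) else 0).sum = l.count t := by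
  induction l with
  | nil => simp
  | cons a l ih =>
    by_cases h : a = t <;> simp [ih, h, add_comm]

lemma Multiset.sum_count_nsmul_eq_of_subset {α : Type*} [DecidableEq α] {s : Multiset α}
    {S : Finset α} (hs : ∀ x ∈ s, x ∈ S) : ∑ t ∈ S, s.count t • {t} = s := by
  rw [← Finset.sum_subset (fun x hx => hs x (Multiset.mem_toFinset.mp hx)),
    Multiset.toFinset_sum_count_nsmul_eq]
  intro x _ hx
  rw [Multiset.count_eq_zero.mpr (Multiset.mem_toFinset.not.mp hx), zero_smul]

lemma boundedAbelianComplexity_of_boundedAddComplexity_indicator {S : Finset ℤ} {ω : ℕ → ℤ}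
    (hω : ∀ i, ω i ∈ S)
    (h : ∀ t ∈ S, BoundedAddComplexity ((fun s => if s = t then (1 : ℤ) else 0) ∘ ω)) :
    BoundedAbelianComplexity ω := by
  choose! M hM using h
  refine ⟨∏ t ∈ S, M t, fun n hn => ?_⟩
  choose! T hTcard hT using fun t ht => hM t ht n hn
  refine ⟨(Fintype.piFinset fun t : S => T t).image fun c => ∑ t : S, (c t).toNat • {(t : ℤ)},
    ?_, fun B hB hlen => ?_⟩
  · calc _ ≤ _ := Finset.card_image_le
      _ = ∏ t : S, (T t).card := Fintype.card_piFinset _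
      _ ≤ ∏ t : S, M t := Finset.prod_le_prod' fun t _ => hTcard t t.2
      _ = ∏ t ∈ S, M t := Finset.prod_coe_sort S M
  obtain ⟨m, rfl⟩ := hB.eq_factorAt hlen
  refine Finset.mem_image.mpr ⟨fun t : S => ((factorAt ω m n).count (t : ℤ) : ℤ),
    Fintype.mem_piFinset.mpr fun t => ?_, ?_⟩
  · have := hT t t.2 _ (factor_factorAt _ m n) (length_factorAt _ m n)
    rwa [← map_factorAt, sum_map_indicator_eq_count] at this
  · simp only [Int.toNat_natCast, ← Multiset.coe_count]
    refine (Finset.sum_coe_sort S fun t =>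
      Multiset.count t (factorAt ω m n : Multiset ℤ) • ({t} : Multiset ℤ)).trans
        (Multiset.sum_count_nsmul_eq_of_subset fun x hx => ?_)
    obtain ⟨i, -, rfl⟩ := List.mem_map.mp (Multiset.mem_coe.mp hx)
    exact hω _

/-- ω has bounded abelian complexity iff every non-erasing morphism maps ω to a word
with bounded additive complexity. -/
theorem stmt15 (S : Finset ℤ) (ω : ℕ → ℤ) (hω : ∀ i : ℕ, ω i ∈ S) :
    BoundedAbelianComplexity ω ↔
      ∀ φ : ℤ → List ℤ, (∀ s ∈ S, φ s ≠ []) →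
        ∀ ω' : ℕ → ℤ, IsImage φ ω ω' → BoundedAddComplexity ω' :=
  ⟨fun h _ hφ _ him => h.boundedAddComplexity_of_isImage hω hφ him,
    fun h => boundedAbelianComplexity_of_boundedAddComplexity_indicator hω fun _ _ =>
      h _ (fun _ _ => List.cons_ne_nil _ _) _ (isImage_singleton _ ω)⟩
end

section
/- Let n ≥ 1 and let ω₁, …, ω_n be infinite words over finite integer alphabets, each with bounded additive complexity and each with slope equal to the same real number α. Then every splice ω of {ω₁, …, ω_n} has bounded additive complexity and slope(ω) = α. -/
/-- `L` is a prefix of the infinite word ω. -/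
def PrefixOf (L : List ℤ) (ω : ℕ → ℤ) : Prop :=
  L = (List.range L.length).map ω

/-- ω is a splice of the infinite words `W 0, …, W (n-1)`. -/
def IsSplice {n : ℕ} (W : Fin n → ℕ → ℤ) (ω : ℕ → ℤ) : Prop :=
  ∃ B : Fin n → ℕ → List ℤ,
    (∀ i : Fin n, ∀ j : ℕ, PrefixOf (((List.range j).map (B i)).flatten) (W i)) ∧
    (∀ j : ℕ, ∃ j' : ℕ, j ≤ j' ∧ ∃ i : Fin n, B i j' ≠ []) ∧
    (∀ j : ℕ,
      PrefixOf
        (((List.range j).map (fun jj => (List.ofFn (fun i : Fin n => B i jj)).flatten)).flatten)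
        ω)

open Finset Filter Topology

/-!
Bounded additive complexity and bounded letters force all factor sums of a given length `k` to
lie within a fixed distance `D` of each other: as the window slides, the sum moves by bounded
steps, so a large spread would produce more than the allowed number of distinct values.
Averaging over consecutive blocks of length `k` and using the slope then gives
`|ω(0) + ⋯ + ω(N-1) - Nα| ≤ D` for every `N`. A prefix of a splice is a union of prefixes of
the spliced words, so these discrepancy bounds add up; and a word of bounded discrepancy has
slope `α` and bounded additive complexity, its factor sums of length `k` lying in a window of
bounded width around `kα`.
-/

theorem List.sum_map_range {M : Type*} [AddCommMonoid M] (f : ℕ → M) (n : ℕ) :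
    ((List.range n).map f).sum = ∑ i ∈ Finset.range n, f i := by
  induction n with
  | zero => simp
  | succ n ih => simp [List.range_succ, Finset.sum_range_succ, ih]

theorem exists_eq_of_forall_le_add_one {h : ℕ → ℤ} (hstep : ∀ j, h (j + 1) ≤ h j + 1) {s : ℤ}
    (m : ℕ) (h0 : h 0 ≤ s) (hm : s ≤ h m) : ∃ j, h j = s := by
  induction m with
  | zero => exact ⟨0, le_antisymm h0 hm⟩
  | succ m ih =>
    by_cases hs : s ≤ h m
    · exact ih hs
    · exact ⟨m + 1, by have := hstep m; omega⟩

theorem sub_le_card_mul_of_forall_le_add {f : ℕ → ℤ} {d : ℤ} (hd : 0 < d)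
    (hstep : ∀ j, f (j + 1) ≤ f j + d) {T : Finset ℤ} (hT : ∀ j, f j ∈ T) (m : ℕ) :
    f m - f 0 < T.card * d := by
  -- `g ∘ f` climbs by at most one per step, so each of the disjoint buckets `g ⁻¹' {s}`,
  -- `0 ≤ s ≤ g (f m)`, meets `T`.
  let g (v : ℤ) : ℤ := (v - f 0) / d
  have hgstep j : g (f (j + 1)) ≤ g (f j) + 1 := by
    calc g (f (j + 1)) ≤ (f j - f 0 + 1 * d) / d := Int.ediv_le_ediv hd (by linarith [hstep j])
      _ = g (f j) + 1 := Int.add_mul_ediv_right _ _ hd.ne'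
  have hsub : Icc 0 (g (f m)) ⊆ T.image g := fun s hs => by
    obtain ⟨j, hj⟩ := exists_eq_of_forall_le_add_one hgstep m (by simp [g, (mem_Icc.1 hs).1])
      (mem_Icc.1 hs).2
    exact mem_image.2 ⟨f j, hT j, hj⟩
  have hcard : g (f m) + 1 ≤ T.card := by
    have := (card_le_card hsub).trans card_image_le
    rw [Int.card_Icc] at this
    omega
  calc f m - f 0 < (g (f m) + 1) * d := Int.lt_ediv_add_one_mul_self _ hd
    _ ≤ T.card * d := by gcongr

theorem abs_sub_le_card_mul_of_forall_abs_sub_le {f : ℕ → ℤ} {d : ℤ} (hd : 0 < d)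
    (hstep : ∀ j, |f (j + 1) - f j| ≤ d) {T : Finset ℤ} (hT : ∀ j, f j ∈ T) (m : ℕ) :
    |f m - f 0| ≤ T.card * d := by
  have hup := sub_le_card_mul_of_forall_le_add hd (fun j => by linarith [(abs_le.1 (hstep j)).2])
    hT m
  have hdown := sub_le_card_mul_of_forall_le_add (f := fun j => -f j) hd
    (fun j => by linarith [(abs_le.1 (hstep j)).1]) (T := T.image Neg.neg)
    (fun j => mem_image_of_mem _ (hT j)) m
  rw [card_image_of_injective _ neg_injective] at hdown
  exact abs_le.2 ⟨by linarith, hup.le⟩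

theorem BoundedAddComplexity.exists_abs_sum_sub_le {w : ℕ → ℤ} (hb : BoundedAddComplexity w)
    (hfin : (Set.range w).Finite) :
    ∃ D : ℤ, 0 ≤ D ∧ ∀ k m, |∑ t ∈ range k, w (m + t) - ∑ t ∈ range k, w t| ≤ D := by
  obtain ⟨M, hM⟩ := hb
  obtain ⟨lo, hlo⟩ := hfin.bddBelow
  obtain ⟨hi, hhi⟩ := hfin.bddAbove
  have hw t : lo ≤ w t ∧ w t ≤ hi := ⟨hlo ⟨t, rfl⟩, hhi ⟨t, rfl⟩⟩
  have hd : 0 < hi - lo + 1 := by linarith [hw 0]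
  refine ⟨M * (hi - lo + 1), by positivity, fun k m => ?_⟩
  rcases Nat.eq_zero_or_pos k with rfl | hk
  · simp only [sum_range_zero, sub_self, abs_zero]
    positivity
  obtain ⟨T, hTcard, hT⟩ := hM k hk
  have hslide j : ∑ t ∈ range k, w (j + 1 + t) + w j = ∑ t ∈ range k, w (j + t) + w (j + k) := by
    rw [← sum_range_succ, sum_range_succ']
    simp only [add_assoc, add_comm 1, add_zero]
  have hstep j : |∑ t ∈ range k, w (j + 1 + t) - ∑ t ∈ range k, w (j + t)| ≤ hi - lo + 1 := by
    rw [abs_le]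
    constructor <;> linarith [hslide j, hw j, hw (j + k)]
  have hmem j : ∑ t ∈ range k, w (j + t) ∈ T := by
    have := hT ((List.range k).map fun t => w (j + t)) ⟨j, by simp⟩ (by simp)
    rwa [List.sum_map_range] at this
  have hTcard' : (T.card : ℤ) ≤ M := by exact_mod_cast hTcard
  calc |∑ t ∈ range k, w (m + t) - ∑ t ∈ range k, w t|
      ≤ T.card * (hi - lo + 1) := by
        simpa only [zero_add] using abs_sub_le_card_mul_of_forall_abs_sub_le
          (f := fun j => ∑ t ∈ range k, w (j + t)) hd hstep hmem m
    _ ≤ M * (hi - lo + 1) := mul_le_mul_of_nonneg_right hTcard' hd.le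

def BoundedDiscrepancy (w : ℕ → ℤ) (α C : ℝ) : Prop :=
  ∀ N : ℕ, |∑ t ∈ range N, (w t : ℝ) - N * α| ≤ C

theorem abs_mul_sub_le_of_forall_abs_sum_sub_le {x : ℕ → ℝ} {α : ℝ}
    (hx : Tendsto (fun N : ℕ => (∑ t ∈ range N, x t) / N) atTop (𝓝 α)) {k : ℕ} (hk : 0 < k)
    {v D : ℝ} (h : ∀ m, |∑ t ∈ range k, x (m + t) - v| ≤ D) : |k * α - v| ≤ D := by
  have hblocks (j : ℕ) : |∑ t ∈ range (j * k), x t - j * v| ≤ j * D := by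
    induction j with
    | zero => simp
    | succ j ih =>
      rw [Nat.succ_mul, sum_range_add]
      push_cast
      calc |∑ t ∈ range (j * k), x t + ∑ t ∈ range k, x (j * k + t) - (j + 1) * v|
          = |(∑ t ∈ range (j * k), x t - j * v) + (∑ t ∈ range k, x (j * k + t) - v)| := by ring_nf
        _ ≤ j * D + D := (abs_add_le _ _).trans (add_le_add ih (h _))
        _ = (j + 1) * D := by ring
  have hmul : Tendsto (fun j : ℕ => j * k) atTop atTop :=
    tendsto_id.atTop_mul_const' hk
  have hlim : Tendsto (fun j : ℕ => (∑ t ∈ range (j * k), x t) / j) atTop (𝓝 (k * α)) := by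
    refine ((hx.comp hmul).const_mul (k : ℝ)).congr' ?_
    filter_upwards [eventually_gt_atTop 0] with j hj
    simp only [Function.comp_apply, Nat.cast_mul]
    field_simp
  refine le_of_tendsto ((continuous_abs.tendsto _).comp (hlim.sub_const v)) ?_
  filter_upwards [eventually_gt_atTop 0] with j hj
  have hj' : (0 : ℝ) < j := by exact_mod_cast hj
  rw [Function.comp_apply, div_sub' hj'.ne', abs_div, abs_of_pos hj', div_le_iff₀ hj']
  exact (hblocks j).trans_eq (mul_comm _ _)

theorem BoundedAddComplexity.exists_boundedDiscrepancy {w : ℕ → ℤ} (hb : BoundedAddComplexity w)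
    (hfin : (Set.range w).Finite) {α : ℝ} (hs : HasSlope w α) : ∃ C, BoundedDiscrepancy w α C := by
  obtain ⟨D, hD0, hD⟩ := hb.exists_abs_sum_sub_le hfin
  refine ⟨D, fun N => ?_⟩
  rcases Nat.eq_zero_or_pos N with rfl | hN
  · simpa using hD0
  rw [abs_sub_comm]
  refine abs_mul_sub_le_of_forall_abs_sum_sub_le hs hN fun m => ?_
  exact_mod_cast hD N m

theorem BoundedDiscrepancy.abs_sum_sub_le {w : ℕ → ℤ} {α C : ℝ} (h : BoundedDiscrepancy w α C)
    (m k : ℕ) : |∑ t ∈ range k, (w (m + t) : ℝ) - k * α| ≤ 2 * C := by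
  have hsplit : ∑ t ∈ range k, (w (m + t) : ℝ) - k * α =
      (∑ t ∈ range (m + k), (w t : ℝ) - (m + k : ℕ) * α) - (∑ t ∈ range m, (w t : ℝ) - m * α) := by
    rw [sum_range_add]
    push_cast
    ring
  rw [hsplit, two_mul]
  exact (abs_sub _ _).trans (add_le_add (h _) (h _))

theorem BoundedDiscrepancy.hasSlope {w : ℕ → ℤ} {α C : ℝ} (h : BoundedDiscrepancy w α C) :
    HasSlope w α := by
  have hdiff : Tendsto (fun N : ℕ => (∑ t ∈ range N, (w t : ℝ)) / N - α) atTop (𝓝 0) := by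
    refine squeeze_zero_norm' ?_ (tendsto_const_div_atTop_nhds_zero_nat C)
    filter_upwards [eventually_gt_atTop 0] with N hN
    have hN' : (0 : ℝ) < N := by exact_mod_cast hN
    have hdiv : (∑ t ∈ range N, (w t : ℝ)) / N - α = (∑ t ∈ range N, (w t : ℝ) - N * α) / N := by
      field_simp
    rw [Real.norm_eq_abs, hdiv, abs_div, abs_of_pos hN']
    exact div_le_div_of_nonneg_right (h N) hN'.le
  simpa [HasSlope] using hdiff.add_const α

theorem BoundedDiscrepancy.boundedAddComplexity {w : ℕ → ℤ} {α C : ℝ}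
    (h : BoundedDiscrepancy w α C) : BoundedAddComplexity w := by
  obtain ⟨c, hc⟩ := exists_nat_ge (2 * C)
  refine ⟨2 * c + 1, fun k _ => ⟨Icc (⌊k * α⌋ - c) (⌊k * α⌋ + c), by rw [Int.card_Icc]; omega, ?_⟩⟩
  rintro B ⟨m, hB⟩ rfl
  set s := ∑ t ∈ range B.length, w (m + t) with hs
  have hbound : |(s : ℝ) - B.length * α| ≤ c := by
    push_cast [hs]
    exact (h.abs_sum_sub_le m B.length).trans hc
  have hfloor := Int.floor_le ((B.length : ℝ) * α)
  have hfloor' := Int.lt_floor_add_one ((B.length : ℝ) * α)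
  rw [abs_le] at hbound
  have hsum : B.sum = s := by rw [hB, List.sum_map_range]
  rw [hsum, mem_Icc]
  constructor
  · have : ((⌊(B.length : ℝ) * α⌋ - c : ℤ) : ℝ) ≤ s := by push_cast; linarith
    exact_mod_cast this
  · have : (s : ℝ) < ((⌊(B.length : ℝ) * α⌋ + c + 1 : ℤ) : ℝ) := by push_cast; linarith
    have := Int.cast_lt.1 this
    omega

section Strands

variable {ι β : Type*} [DecidableEq ι]

-- A splice is `ℓ.flatMap Prod.snd` for a list `ℓ` of blocks tagged by the word they come from.
def strand (ℓ : List (ι × List β)) (i : ι) : List β :=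
  (ℓ.filter (·.1 = i)).flatMap Prod.snd

@[simp]
theorem strand_nil (i : ι) : strand ([] : List (ι × List β)) i = [] := rfl

theorem strand_cons (b : ι × List β) (ℓ : List (ι × List β)) (i : ι) :
    strand (b :: ℓ) i = (if b.1 = i then b.2 else []) ++ strand ℓ i := by
  by_cases h : b.1 = i <;> simp [strand, h]

theorem exists_take_flatMap_snd_eq (ℓ : List (ι × List β)) (N : ℕ) :
    ∃ ℓ' : List (ι × List β), (ℓ.flatMap Prod.snd).take N = ℓ'.flatMap Prod.snd ∧
      ∀ i, strand ℓ' i <+: strand ℓ i := by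
  induction ℓ generalizing N with
  | nil => exact ⟨[], by simp, fun i => List.nil_prefix⟩
  | cons b ℓ ih =>
    by_cases hN : N ≤ b.2.length
    · refine ⟨[(b.1, b.2.take N)], by simp [List.take_append_of_le_length hN], fun i => ?_⟩
      simp only [strand_cons, strand_nil, List.append_nil]
      split_ifs
      · exact (List.take_prefix N b.2).trans (List.prefix_append _ _)
      · exact List.nil_prefix
    · obtain ⟨ℓ', htake, hpre⟩ := ih (N - b.2.length)
      refine ⟨b :: ℓ', ?_, fun i => ?_⟩
      · rw [List.flatMap_cons, List.flatMap_cons, ← htake, List.take_append,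
          List.take_of_length_le (by omega)]
      · simpa only [strand_cons] using (List.prefix_append_right_inj _).2 (hpre i)

theorem length_flatMap_snd [Fintype ι] (ℓ : List (ι × List β)) :
    (ℓ.flatMap Prod.snd).length = ∑ i, (strand ℓ i).length := by
  induction ℓ with
  | nil => simp
  | cons b ℓ ih => simp [strand_cons, ih, sum_add_distrib, apply_ite List.length]

theorem sum_flatMap_snd [Fintype ι] [AddCommMonoid β] (ℓ : List (ι × List β)) :
    (ℓ.flatMap Prod.snd).sum = ∑ i, (strand ℓ i).sum := by
  induction ℓ with
  | nil => simp
  | cons b ℓ ih => simp [strand_cons, ih, sum_add_distrib, apply_ite List.sum]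

end Strands

theorem PrefixOf.sum_eq {L : List ℤ} {w : ℕ → ℤ} (h : PrefixOf L w) :
    L.sum = ∑ t ∈ range L.length, w t := by
  rw [← List.sum_map_range, ← h]

theorem PrefixOf.take {L : List ℤ} {w : ℕ → ℤ} (h : PrefixOf L w) (k : ℕ) :
    PrefixOf (L.take k) w := by
  rw [PrefixOf, h]
  simp [← List.map_take]

theorem PrefixOf.of_prefix {L L' : List ℤ} {w : ℕ → ℤ} (h : PrefixOf L w) (h' : L' <+: L) :
    PrefixOf L' w :=
  List.prefix_iff_eq_take.1 h' ▸ h.take _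

theorem exists_le_sum_range_of_frequently_ne_zero {r : ℕ → ℕ} (h : ∀ j, ∃ j', j ≤ j' ∧ r j' ≠ 0)
    (N : ℕ) : ∃ j, N ≤ ∑ jj ∈ range j, r jj := by
  induction N with
  | zero => exact ⟨0, Nat.zero_le _⟩
  | succ N ih =>
    obtain ⟨j, hj⟩ := ih
    obtain ⟨j', hjj', hr⟩ := h j
    refine ⟨j' + 1, ?_⟩
    have := sum_le_sum_of_subset (f := r) (range_subset_range.2 hjj')
    rw [sum_range_succ]
    omega

theorem IsSplice.exists_sum_range_eq {n : ℕ} {W : Fin n → ℕ → ℤ} {ω : ℕ → ℤ} (hω : IsSplice W ω)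
    (N : ℕ) : ∃ a : Fin n → ℕ, ∑ i, a i = N ∧
      ∑ t ∈ range N, ω t = ∑ i, ∑ t ∈ range (a i), W i t := by
  obtain ⟨B, hW, hnonempty, hω⟩ := hω
  let rounds (j : ℕ) : List (Fin n × List ℤ) :=
    (List.range j).flatMap fun jj => List.ofFn fun i => (i, B i jj)
  have h_flatMap j : (rounds j).flatMap Prod.snd =
      ((List.range j).map fun jj => (List.ofFn fun i => B i jj).flatten).flatten := by
    simp [rounds, List.flatMap, List.flatten_flatten, List.map_ofFn, Function.comp_def]
  have h_strand j i : strand (rounds j) i = ((List.range j).map (B i)).flatten := by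
    simp [rounds, strand, List.ofFn_eq_map, List.filter_map, Function.comp_def, List.filter_eq,
      List.count_finRange, List.flatMap, List.flatten_flatten]
  have h_length j :
      ((rounds j).flatMap Prod.snd).length = ∑ jj ∈ range j, ∑ i, (B i jj).length := by
    simp [h_flatMap, List.length_flatten, List.sum_map_range, List.sum_ofFn]
  obtain ⟨j, hj⟩ : ∃ j, N ≤ ((rounds j).flatMap Prod.snd).length := by
    simp only [h_length]
    refine exists_le_sum_range_of_frequently_ne_zero (fun j => ?_) N
    obtain ⟨j', hjj', i, hi⟩ := hnonempty j
    exact ⟨j', hjj', fun h0 =>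
      hi (List.length_eq_zero_iff.1 (sum_eq_zero_iff.1 h0 i (mem_univ i)))⟩
  obtain ⟨ℓ, htake, hpre⟩ := exists_take_flatMap_snd_eq (rounds j) N
  have hℓ i : PrefixOf (strand ℓ i) (W i) := (h_strand j i ▸ hW i j).of_prefix (hpre i)
  have hprefix : PrefixOf (ℓ.flatMap Prod.snd) ω := htake ▸ (h_flatMap j ▸ hω j).take N
  have hlen : (ℓ.flatMap Prod.snd).length = N := by rw [← htake, List.length_take, min_eq_left hj]
  refine ⟨fun i => (strand ℓ i).length, by rw [← length_flatMap_snd, hlen], ?_⟩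
  rw [← hlen, ← hprefix.sum_eq, sum_flatMap_snd]
  exact sum_congr rfl fun i _ => (hℓ i).sum_eq

theorem IsSplice.boundedDiscrepancy {n : ℕ} {W : Fin n → ℕ → ℤ} {ω : ℕ → ℤ} (hω : IsSplice W ω)
    {α : ℝ} {C : Fin n → ℝ} (hC : ∀ i, BoundedDiscrepancy (W i) α (C i)) :
    BoundedDiscrepancy ω α (∑ i, C i) := by
  intro N
  obtain ⟨a, rfl, hsum⟩ := hω.exists_sum_range_eq N
  have hsum' : ∑ t ∈ range (∑ i, a i), (ω t : ℝ) - ((∑ i, a i : ℕ) : ℝ) * α =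
      ∑ i, (∑ t ∈ range (a i), (W i t : ℝ) - a i * α) := by
    rw [← Int.cast_sum, hsum]
    push_cast
    rw [sum_mul, ← sum_sub_distrib]
  rw [hsum']
  exact (abs_sum_le_sum_abs _ _).trans (sum_le_sum fun i _ => hC i (a i))

theorem stmt16_general (n : ℕ) (W : Fin n → ℕ → ℤ)
    (hfin : ∀ i : Fin n, (Set.range (W i)).Finite)
    (hb : ∀ i : Fin n, BoundedAddComplexity (W i))
    (α : ℝ) (hs : ∀ i : Fin n, HasSlope (W i) α)
    (ω : ℕ → ℤ) (hω : IsSplice W ω) :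
    BoundedAddComplexity ω ∧ HasSlope ω α := by
  choose C hC using fun i => (hb i).exists_boundedDiscrepancy (hfin i) (hs i)
  have hωC := hω.boundedDiscrepancy hC
  exact ⟨hωC.boundedAddComplexity, hωC.hasSlope⟩

/-- Any splice of words with bounded additive complexity, all of slope α, has bounded
additive complexity and slope α. -/
theorem stmt16 (n : ℕ) (hn : 1 ≤ n) (W : Fin n → ℕ → ℤ)
    (hfin : ∀ i : Fin n, (Set.range (W i)).Finite)
    (hb : ∀ i : Fin n, BoundedAddComplexity (W i))
    (α : ℝ) (hs : ∀ i : Fin n, HasSlope (W i) α)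
    (ω : ℕ → ℤ) (hω : IsSplice W ω) :
    BoundedAddComplexity ω ∧ HasSlope ω α :=
  stmt16_general n W hfin hb α hs ω hω
end

section
/- For every k ≥ 1 there exists a recurrent infinite word ω with range contained in {0, 1, 2, …, 2k} such that the additive complexity of ω satisfies ρ(n) = 2k + 1 for all n ≥ 1. -/
/-- ω is recurrent: every factor occurs at arbitrarily large positions. -/
def Recurrent (ω : ℕ → ℤ) : Prop :=
  ∀ B : List ℤ, Factor ω B → ∀ m₀ : ℕ, ∃ m : ℕ, m₀ ≤ m ∧
    B = (List.range B.length).map (fun i => ω (m + i))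

/-!
Write `ω m = k + (e (m + 1) - e m)` for a word `e` with values in `{0, …, k}`. A factor of
length `n` starting at `m` then sums to `k n + (e (m + n) - e m)`, so at most `2k + 1` sums occur,
and all of them do as soon as `e` contains every block `0ⁿ v 0ⁿ` with `v ≤ k`. Such an `e` that
is moreover recurrent is the limit of the words `w₀ = [0]`, `w_{j+1} = w_j w_j b_j`, where the
blocks `b_j` run through all the `0ⁿ v 0ⁿ`: the second copy of `w_j` repeats every prefix further
out.
-/

lemma List.IsPrefix.getD_eq {α : Type*} {l₁ l₂ : List α} (h : l₁ <+: l₂) (d : α) {i : ℕ}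
    (hi : i < l₁.length) : l₂.getD i d = l₁.getD i d := by
  rw [List.getD_eq_getElem _ _ hi, List.getD_eq_getElem _ _ (hi.trans_le h.length_le),
    h.getElem hi]

section DoublingWord

variable {α : Type*} (a : α) (b : ℕ → List α)

def doublingWord : ℕ → List α
  | 0 => [a]
  | j + 1 => doublingWord j ++ doublingWord j ++ b j

/-- The infinite word of which every `doublingWord a b j` is a prefix. -/
def doublingLimit (m : ℕ) : α := (doublingWord a b (m + 1)).getD m a

lemma doublingWord_succ (j : ℕ) :
    doublingWord a b (j + 1) = doublingWord a b j ++ doublingWord a b j ++ b j := rfl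

lemma lt_length_doublingWord (j : ℕ) : j < (doublingWord a b j).length := by
  induction j with
  | zero => simp [doublingWord]
  | succ j ih => simp only [doublingWord_succ, List.length_append]; omega

lemma doublingWord_prefix_of_le {i j : ℕ} (h : i ≤ j) :
    doublingWord a b i <+: doublingWord a b j := by
  induction j, h using Nat.le_induction with
  | base => exact List.prefix_refl _
  | succ j _ ih =>
    rw [doublingWord_succ, List.append_assoc]
    exact ih.trans (List.prefix_append _ _)

lemma doublingLimit_eq_getD {j m : ℕ} (hm : m < (doublingWord a b j).length) :
    doublingLimit a b m = (doublingWord a b j).getD m a := by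
  rcases le_total j (m + 1) with h | h
  · exact (doublingWord_prefix_of_le a b h).getD_eq a hm
  · exact ((doublingWord_prefix_of_le a b h).getD_eq a
      (by have := lt_length_doublingWord a b (m + 1); omega)).symm

lemma doublingLimit_length_add {j i : ℕ} (hi : i < (doublingWord a b j).length) :
    doublingLimit a b ((doublingWord a b j).length + i) = doublingLimit a b i := by
  rw [doublingLimit_eq_getD a b (j := j + 1) (by simp [doublingWord_succ]; omega),
    doublingLimit_eq_getD a b hi, doublingWord_succ, List.append_assoc,
    List.getD_append_right _ _ _ _ (by omega), Nat.add_sub_cancel_left,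
    List.getD_append _ _ _ _ hi]

lemma doublingLimit_two_mul_length_add {j i : ℕ} (hi : i < (b j).length) :
    doublingLimit a b (2 * (doublingWord a b j).length + i) = (b j).getD i a := by
  rw [doublingLimit_eq_getD a b (j := j + 1) (by simp [doublingWord_succ]; omega),
    doublingWord_succ, List.getD_append_right _ _ _ _ (by simp; omega)]
  simp [two_mul]

lemma doublingLimit_mem {s : Set α} (ha : a ∈ s) (hb : ∀ j, ∀ x ∈ b j, x ∈ s) (m : ℕ) :
    doublingLimit a b m ∈ s := by
  have hword : ∀ j, ∀ x ∈ doublingWord a b j, x ∈ s := by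
    intro j
    induction j with
    | zero => simpa [doublingWord] using ha
    | succ j ih =>
      simp only [doublingWord_succ, List.mem_append]
      rintro x ((hx | hx) | hx)
      exacts [ih x hx, ih x hx, hb j x hx]
  have hm := lt_length_doublingWord a b (m + 1)
  rw [doublingLimit, List.getD_eq_getElem _ _ (by omega)]
  exact hword _ _ (List.getElem_mem _)

end DoublingWord

def PrefixRecurrent {α : Type*} (e : ℕ → α) : Prop :=
  ∀ N m₀ : ℕ, ∃ p, m₀ ≤ p ∧ ∀ r < N, e (p + r) = e r

lemma prefixRecurrent_doublingLimit {α : Type*} (a : α) (b : ℕ → List α) :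
    PrefixRecurrent (doublingLimit a b) := by
  intro N m₀
  have := lt_length_doublingWord a b (max N m₀)
  exact ⟨_, by omega, fun r hr => doublingLimit_length_add a b (j := max N m₀) (by omega)⟩

lemma PrefixRecurrent.map_adjacent {α β : Type*} {e : ℕ → α} (he : PrefixRecurrent e)
    (f : α → α → β) : PrefixRecurrent fun m => f (e m) (e (m + 1)) := by
  intro N m₀
  obtain ⟨p, hp, he⟩ := he (N + 1) m₀
  refine ⟨p, hp, fun r hr => ?_⟩
  change f (e (p + r)) (e (p + r + 1)) = f (e r) (e (r + 1))
  rw [he r (by omega), add_assoc, he (r + 1) (by omega)]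

lemma PrefixRecurrent.recurrent {ω : ℕ → ℤ} (hω : PrefixRecurrent ω) : Recurrent ω := by
  rintro B ⟨m, hB⟩ m₀
  obtain ⟨p, hp, hω⟩ := hω (m + B.length) m₀
  refine ⟨p + m, by omega, hB.trans (List.map_congr_left fun i hi => ?_)⟩
  rw [List.mem_range] at hi
  rw [add_assoc, hω _ (by omega)]

lemma setOf_factor_sum_eq_range (ω : ℕ → ℤ) (n : ℕ) :
    {s : ℤ | ∃ B : List ℤ, Factor ω B ∧ B.length = n ∧ B.sum = s} =
      Set.range fun m => ((List.range n).map fun i => ω (m + i)).sum := by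
  ext s
  constructor
  · rintro ⟨B, ⟨m, hB⟩, rfl, rfl⟩
    exact ⟨m, congrArg List.sum hB.symm⟩
  · rintro ⟨m, rfl⟩
    exact ⟨_, ⟨m, by simp⟩, by simp, rfl⟩

lemma sum_map_range_add_sub (c : ℤ) (e : ℕ → ℤ) (m n : ℕ) :
    ((List.range n).map fun i => c + (e (m + i + 1) - e (m + i))).sum =
      c * n + (e (m + n) - e m) := by
  induction n with
  | zero => simp
  | succ n ih =>
    rw [List.sum_range_succ, ih]
    push_cast
    ring_nf

lemma range_sub_eq_Icc {e : ℕ → ℤ} {k : ℤ} {n : ℕ} (he : ∀ m, e m ∈ Set.Icc 0 k)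
    (hup : ∀ v ∈ Set.Icc 0 k, ∃ m, e m = 0 ∧ e (m + n) = v)
    (hdown : ∀ v ∈ Set.Icc 0 k, ∃ m, e m = v ∧ e (m + n) = 0) :
    Set.range (fun m => e (m + n) - e m) = Set.Icc (-k) k := by
  ext s
  constructor
  · rintro ⟨m, rfl⟩
    obtain ⟨h₁, h₂⟩ := he m
    obtain ⟨h₃, h₄⟩ := he (m + n)
    constructor <;> linarith
  · rintro ⟨hlo, hhi⟩
    rcases le_total 0 s with hs | hs
    · obtain ⟨m, h₀, hv⟩ := hup s ⟨hs, hhi⟩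
      exact ⟨m, by simp [h₀, hv]⟩
    · obtain ⟨m, hv, h₀⟩ := hdown (-s) ⟨by linarith, by linarith⟩
      exact ⟨m, by simp [h₀, hv]⟩

lemma ncard_setOf_factor_sum_of_range_sub {e : ℕ → ℤ} {k n : ℕ}
    (he : Set.range (fun m => e (m + n) - e m) = Set.Icc (-k : ℤ) k) :
    Set.ncard {s : ℤ | ∃ B : List ℤ,
      Factor (fun m => k + (e (m + 1) - e m)) B ∧ B.length = n ∧ B.sum = s} = 2 * k + 1 := by
  rw [setOf_factor_sum_eq_range]
  simp only [sum_map_range_add_sub]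
  rw [Set.range_comp' (fun t => (k : ℤ) * n + t) (fun m => e (m + n) - e m),
    Set.ncard_image_of_injective _ (add_right_injective _), he, ← Finset.coe_Icc,
    Set.ncard_coe_finset, Int.card_Icc]
  omega

/-- The block `0ⁿ v 0ⁿ` with `n = j / (k + 1)` and `v = j % (k + 1)`; every `n` and every
`v ≤ k` occur as `j` runs through `ℕ`. -/
def gadgetBlock (k j : ℕ) : List ℤ :=
  List.replicate (j / (k + 1)) 0 ++ ((j % (k + 1) : ℕ) : ℤ) :: List.replicate (j / (k + 1)) 0

def gadgetWord (k : ℕ) : ℕ → ℤ := doublingLimit 0 (gadgetBlock k)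

lemma gadgetWord_mem_Icc (k m : ℕ) : gadgetWord k m ∈ Set.Icc (0 : ℤ) k := by
  refine doublingLimit_mem _ _ (by simp) (fun j x hx => ?_) m
  simp only [gadgetBlock, List.mem_append, List.mem_cons, List.mem_replicate] at hx
  rcases hx with hx | rfl | hx
  · simp [hx.2]
  · exact ⟨by positivity, by have := Nat.mod_lt j (by omega : 0 < k + 1); omega⟩
  · simp [hx.2]

lemma exists_gadgetWord_eq (k : ℕ) {n : ℕ} (hn : 1 ≤ n) {v : ℤ} (hv : v ∈ Set.Icc (0 : ℤ) k) :
    ∃ m, gadgetWord k m = 0 ∧ gadgetWord k (m + n) = v ∧ gadgetWord k (m + 2 * n) = 0 := by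
  set j := v.toNat + (k + 1) * n
  have hblock : gadgetBlock k j = List.replicate n 0 ++ v :: List.replicate n 0 := by
    have hvk : v.toNat < k + 1 := by have := hv.2; omega
    rw [gadgetBlock, Nat.add_mul_div_left _ _ k.succ_pos, Nat.div_eq_of_lt hvk, zero_add,
      Nat.add_mul_mod_self_left, Nat.mod_eq_of_lt hvk, Int.toNat_of_nonneg hv.1]
  set P := 2 * (doublingWord 0 (gadgetBlock k) j).length
  have hP : ∀ i < 2 * n + 1,
      gadgetWord k (P + i) = (List.replicate n 0 ++ v :: List.replicate n 0).getD i 0 := by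
    intro i hi
    rw [gadgetWord, doublingLimit_two_mul_length_add _ _ (by simp [hblock]; omega), hblock]
  refine ⟨P, ?_, ?_, ?_⟩
  · rw [← add_zero P, hP 0 (by omega), List.getD_append _ _ _ _ (by simp; omega),
      List.getD_replicate _ hn]
  · simpa using hP n (by omega)
  · obtain ⟨n, rfl⟩ : ∃ n', n = n' + 1 := ⟨n - 1, by omega⟩
    rw [hP _ (by omega), List.getD_append_right _ _ _ _ (by simp), List.length_replicate,
      show 2 * (n + 1) - (n + 1) = n + 1 by omega, List.getD_cons_succ,
      List.getD_replicate _ (Nat.lt_succ_self n)]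

lemma range_gadgetWord_sub (k : ℕ) {n : ℕ} (hn : 1 ≤ n) :
    Set.range (fun m => gadgetWord k (m + n) - gadgetWord k m) = Set.Icc (-k : ℤ) k :=
  range_sub_eq_Icc (gadgetWord_mem_Icc k)
    (fun _ hv => (exists_gadgetWord_eq k hn hv).imp fun _ h => ⟨h.1, h.2.1⟩)
    (fun _ hv => (exists_gadgetWord_eq k hn hv).elim fun m h =>
      ⟨m + n, h.2.1, by rw [add_assoc, ← two_mul]; exact h.2.2⟩)

theorem stmt17_general (k : ℕ) :
    ∃ ω : ℕ → ℤ, (∀ i : ℕ, ω i ∈ Finset.Icc (0 : ℤ) (2 * (k : ℤ))) ∧ Recurrent ω ∧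
      ∀ n : ℕ, 1 ≤ n →
        Set.ncard {s : ℤ | ∃ B : List ℤ, Factor ω B ∧ B.length = n ∧ B.sum = s}
          = 2 * k + 1 := by
  refine ⟨fun m => k + (gadgetWord k (m + 1) - gadgetWord k m), fun i => ?_,
    ((prefixRecurrent_doublingLimit _ _).map_adjacent fun x y => (k : ℤ) + (y - x)).recurrent,
    fun n hn => ncard_setOf_factor_sum_of_range_sub (range_gadgetWord_sub k hn)⟩
  obtain ⟨h₀, h₁⟩ := gadgetWord_mem_Icc k i
  obtain ⟨h₂, h₃⟩ := gadgetWord_mem_Icc k (i + 1)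
  rw [Finset.mem_Icc]
  constructor <;> linarith

/-- For every k ≥ 1 there is a recurrent word over {0, 1, …, 2k} with constant
additive complexity 2k + 1. -/
theorem stmt17 (k : ℕ) (hk : 1 ≤ k) :
    ∃ ω : ℕ → ℤ, (∀ i : ℕ, ω i ∈ Finset.Icc (0 : ℤ) (2 * (k : ℤ))) ∧ Recurrent ω ∧
      ∀ n : ℕ, 1 ≤ n →
        Set.ncard {s : ℤ | ∃ B : List ℤ, Factor ω B ∧ B.length = n ∧ B.sum = s}
          = 2 * k + 1 :=
  stmt17_general k
end
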